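/- Let p be a prime, G a finite group, H a subgroup of G, and P a p-subgroup of G with P ≤ H. Assume: (i) any two G-conjugate elementary abelian p-subgroups of P are H-conjugate, i.e. for all elementary abelian p-subgroups E₁, E₂ ≤ P and all g ∈ G with gE₁g⁻¹ = E₂ there exists h ∈ H with hE₁h⁻¹ = E₂; and (ii) for every elementary abelian p-subgroup E ≤ P, every automorphism of E induced by G-conjugation is induced by H-conjugation, i.e. for every g ∈ G with gEg⁻¹ = E there exists h ∈ H with hEh⁻¹ = E and hxh⁻¹ = gxg⁻¹ for all x ∈ E. Then for all elementary abelian p-subgroups E₁, E₂ ≤ P and every g ∈ G with gE₁g⁻¹ ≤ E₂, there exists h ∈ H such that hxh⁻¹ = gxg⁻¹ for all x ∈ E₁. -/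

import Mathlib

/-!
The `G`-morphism `c_g : E₁ → E₂` is the `G`-isomorphism `E₁ → gE₁g⁻¹` followed by an
inclusion. By (i) some `h₁ ∈ H` also maps `E₁` onto `gE₁g⁻¹`, so `h₁⁻¹g` normalizes `E₁`;
by (ii) it acts on `E₁` like some `h₂ ∈ H`, and then `h₁h₂` induces `c_g` on `E₁`.
-/

/-- A subgroup `E` of `G` is elementary abelian (for the prime `p`) if it is abelian and
every element `x ∈ E` satisfies `x ^ p = 1`. -/
def Subgroup.IsElementaryAbelian {G : Type*} [Group G] (p : ℕ) (E : Subgroup G) : Prop :=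
  (∀ x ∈ E, ∀ y ∈ E, x * y = y * x) ∧ (∀ x ∈ E, x ^ p = 1)

/-- The conjugate `gQg⁻¹` of a subgroup `Q` by an element `g`. -/
def Subgroup.conjugateBy {G : Type*} [Group G] (g : G) (Q : Subgroup G) : Subgroup G :=
  Q.map (MulAut.conj g).toMonoidHom

namespace Subgroup

variable {G : Type*} [Group G]

theorem IsElementaryAbelian.mono {p : ℕ} {E F : Subgroup G} (hEF : E ≤ F)
    (hF : F.IsElementaryAbelian p) : E.IsElementaryAbelian p :=
  ⟨fun x hx y hy ↦ hF.1 x (hEF hx) y (hEF hy), fun x hx ↦ hF.2 x (hEF hx)⟩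

theorem conjugateBy_le_iff {g : G} {E F : Subgroup G} :
    conjugateBy g E ≤ F ↔ ∀ x ∈ E, g * x * g⁻¹ ∈ F :=
  map_le_iff_le_comap

theorem conjugateBy_one (Q : Subgroup G) : conjugateBy 1 Q = Q := by
  rw [conjugateBy, map_one]
  exact map_id Q

theorem conjugateBy_mul (a b : G) (Q : Subgroup G) :
    conjugateBy (a * b) Q = conjugateBy a (conjugateBy b Q) := by
  rw [conjugateBy, conjugateBy, conjugateBy, map_map, map_mul]
  rfl

theorem conjugateBy_inv_mul_eq_self {g h : G} {Q : Subgroup G}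
    (hgh : conjugateBy h Q = conjugateBy g Q) : conjugateBy (h⁻¹ * g) Q = Q := by
  rw [conjugateBy_mul, ← hgh, ← conjugateBy_mul, inv_mul_cancel, conjugateBy_one]

end Subgroup

open Subgroup in
theorem homs_eq_of_conj_classes_and_auts_eq_general
    (p : ℕ)
    (G : Type*) [Group G] (H : Subgroup G)
    (P : Subgroup G)
    (hconj : ∀ E₁ E₂ : Subgroup G, E₁ ≤ P → E₂ ≤ P →
      E₁.IsElementaryAbelian p → E₂.IsElementaryAbelian p →
      ∀ g : G, Subgroup.conjugateBy g E₁ = E₂ →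
        ∃ h ∈ H, Subgroup.conjugateBy h E₁ = E₂)
    (haut : ∀ E : Subgroup G, E ≤ P → E.IsElementaryAbelian p →
      ∀ g : G, Subgroup.conjugateBy g E = E →
        ∃ h ∈ H, Subgroup.conjugateBy h E = E ∧ ∀ x ∈ E, h * x * h⁻¹ = g * x * g⁻¹) :
    ∀ E₁ E₂ : Subgroup G, E₁ ≤ P → E₂ ≤ P →
      E₁.IsElementaryAbelian p → E₂.IsElementaryAbelian p →
      ∀ g : G, (∀ x ∈ E₁, g * x * g⁻¹ ∈ E₂) →
        ∃ h ∈ H, ∀ x ∈ E₁, h * x * h⁻¹ = g * x * g⁻¹ := by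
  intro E₁ E₂ hE₁P hE₂P hE₁ hE₂ g hg
  have hgE₁ : conjugateBy g E₁ ≤ E₂ := conjugateBy_le_iff.2 hg
  obtain ⟨h₁, hh₁H, hh₁⟩ :=
    hconj E₁ _ hE₁P (hgE₁.trans hE₂P) hE₁ (hE₂.mono hgE₁) g rfl
  obtain ⟨h₂, hh₂H, -, hh₂⟩ :=
    haut E₁ hE₁P hE₁ (h₁⁻¹ * g) (conjugateBy_inv_mul_eq_self hh₁)
  refine ⟨h₁ * h₂, H.mul_mem hh₁H hh₂H, fun x hx ↦ ?_⟩
  calc h₁ * h₂ * x * (h₁ * h₂)⁻¹ = h₁ * (h₂ * x * h₂⁻¹) * h₁⁻¹ := by group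
    _ = g * x * g⁻¹ := by rw [hh₂ x hx]; group

/-- Let `p` be a prime, `G` a finite group, `H ≤ G` a subgroup and
`P ≤ H` a `p`-subgroup of `G`.  Assume (i) any two `G`-conjugate elementary abelian
`p`-subgroups of `P` are `H`-conjugate, and (ii) for every elementary abelian
`p`-subgroup `E ≤ P`, every automorphism of `E` induced by `G`-conjugation is induced by
`H`-conjugation.  Then for all elementary abelian `p`-subgroups `E₁, E₂ ≤ P` and every
`g ∈ G` with `gE₁g⁻¹ ≤ E₂` there is `h ∈ H` with `hxh⁻¹ = gxg⁻¹` for all `x ∈ E₁`. -/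
theorem homs_eq_of_conj_classes_and_auts_eq
    (p : ℕ) [Fact p.Prime]
    (G : Type*) [Group G] [Finite G] (H : Subgroup G)
    (P : Subgroup G) (hP : IsPGroup p P) (hPH : P ≤ H)
    (hconj : ∀ E₁ E₂ : Subgroup G, E₁ ≤ P → E₂ ≤ P →
      E₁.IsElementaryAbelian p → E₂.IsElementaryAbelian p →
      ∀ g : G, Subgroup.conjugateBy g E₁ = E₂ →
        ∃ h ∈ H, Subgroup.conjugateBy h E₁ = E₂)
    (haut : ∀ E : Subgroup G, E ≤ P → E.IsElementaryAbelian p →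
      ∀ g : G, Subgroup.conjugateBy g E = E →
        ∃ h ∈ H, Subgroup.conjugateBy h E = E ∧ ∀ x ∈ E, h * x * h⁻¹ = g * x * g⁻¹) :
    ∀ E₁ E₂ : Subgroup G, E₁ ≤ P → E₂ ≤ P →
      E₁.IsElementaryAbelian p → E₂.IsElementaryAbelian p →
      ∀ g : G, (∀ x ∈ E₁, g * x * g⁻¹ ∈ E₂) →
        ∃ h ∈ H, ∀ x ∈ E₁, h * x * h⁻¹ = g * x * g⁻¹ :=
  homs_eq_of_conj_classes_and_auts_eq_general p G H P hconj haut
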